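/- For the matrix polynomial P(ξ) = [[ξ₁² + ξ₂², ξ₁], [ξ₂, 0]] on ℝ², the inverse at points where ξ₁ξ₂ ≠ 0 is P(ξ)^{-1} = (1/(ξ₁ξ₂))·[[0, ξ₁], [ξ₂, −(ξ₁² + ξ₂²)]]. Moreover the entry (ξ₁² + ξ₂²)/(ξ₁ξ₂) is unbounded on {ξ : ξ₁ξ₂ ≠ 0}; hence the numerator polynomial q(ξ) = ξ₁² + ξ₂² is not dominated by Δ(ξ) = ξ₁ξ₂, i.e. there is no constant C with q̃(ξ) ≤ C Δ̃(ξ) for all ξ ∈ ℝ². -/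

import Mathlib

open MeasureTheory Filter

noncomputable def mderiv {d : ℕ} (α : Fin d → ℕ) (p : MvPolynomial (Fin d) ℂ) :
    MvPolynomial (Fin d) ℂ :=
  (List.finRange d).foldl (fun q i => (fun r => MvPolynomial.pderiv i r)^[α i] q) p

noncomputable def evalR {d : ℕ} (p : MvPolynomial (Fin d) ℂ) (ξ : Fin d → ℝ) : ℂ :=
  MvPolynomial.eval (fun i => (ξ i : ℂ)) p

/-- `p̃(ξ) = (∑_α |∂^α p(ξ)|²)^{1/2}`, sum over all multi-indices `α ∈ ℕ^d`. -/
noncomputable def ptilde {d : ℕ} (p : MvPolynomial (Fin d) ℂ) (ξ : Fin d → ℝ) : ℝ :=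
  Real.sqrt (∑' α : Fin d → ℕ, ‖evalR (mderiv α p) ξ‖ ^ 2)

open Matrix

/-- The matrix polynomial `P(ξ) = [[ξ₁² + ξ₂², ξ₁], [ξ₂, 0]]`. -/
noncomputable def Pmat (ξ : Fin 2 → ℝ) : Matrix (Fin 2) (Fin 2) ℂ :=
  !![((ξ 0 : ℂ) ^ 2 + (ξ 1 : ℂ) ^ 2), (ξ 0 : ℂ); (ξ 1 : ℂ), 0]

open MvPolynomial

@[simp] lemma my_pderiv_two (i : Fin 2) : pderiv i (2 : MvPolynomial (Fin 2) ℂ) = 0 := by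
  rw [show (2 : MvPolynomial (Fin 2) ℂ) = C 2 by
    rw [show (2:ℂ) = ((2:ℕ):ℂ) by norm_num, C_eq_coe_nat]; norm_num, pderiv_C]

lemma mderiv_two (α : Fin 2 → ℕ) (p : MvPolynomial (Fin 2) ℂ) :
    mderiv α p = (fun r => pderiv 1 r)^[α 1] ((fun r => pderiv 0 r)^[α 0] p) := by
  simp [mderiv, List.finRange, List.foldl]

lemma iter_zero (i : Fin 2) (p : MvPolynomial (Fin 2) ℂ) (m k : ℕ)
    (h : (fun r => pderiv i r)^[m] p = 0) (hk : m ≤ k) :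
    (fun r => pderiv i r)^[k] p = 0 := by
  obtain ⟨j, rfl⟩ := Nat.exists_eq_add_of_le hk
  rw [add_comm, Function.iterate_add_apply, h]
  exact Function.iterate_fixed (by simp) j

noncomputable def qpol : MvPolynomial (Fin 2) ℂ := X 0 ^ 2 + X 1 ^ 2
noncomputable def dpol : MvPolynomial (Fin 2) ℂ := X 0 * X 1

lemma mderiv_q_zero (α : Fin 2 → ℕ) (h : ¬ (α 0 < 3 ∧ α 1 < 3)) :
    mderiv α qpol = 0 := by
  rw [mderiv_two]
  rcases Nat.lt_or_ge (α 0) 3 with h0 | h0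
  · have h1 : 3 ≤ α 1 := by omega
    interval_cases h2 : α 0
    · exact iter_zero _ _ 3 _ (by simp [qpol, Function.iterate_succ, pderiv_X, Pi.single]) h1
    · exact iter_zero _ _ 1 _ (by simp [qpol, Function.iterate_succ, pderiv_X, Pi.single]) (by omega)
    · exact iter_zero _ _ 1 _ (by simp [qpol, Function.iterate_succ, pderiv_X, Pi.single]) (by omega)
  · rw [iter_zero 0 qpol 3 _ (by simp [qpol, Function.iterate_succ, pderiv_X, Pi.single]) h0]
    exact Function.iterate_fixed (by simp) _

lemma mderiv_d_zero (α : Fin 2 → ℕ) (h : ¬ (α 0 < 2 ∧ α 1 < 2)) :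
    mderiv α dpol = 0 := by
  rw [mderiv_two]
  rcases Nat.lt_or_ge (α 0) 2 with h0 | h0
  · have h1 : 2 ≤ α 1 := by omega
    interval_cases h2 : α 0
    · exact iter_zero _ _ 2 _ (by simp [dpol, Function.iterate_succ, pderiv_X, Pi.single]) h1
    · exact iter_zero _ _ 2 _ (by simp [dpol, Function.iterate_succ, pderiv_X, Pi.single]) h1
  · rw [iter_zero 0 dpol 2 _ (by simp [dpol, Function.iterate_succ, pderiv_X, Pi.single]) h0]
    exact Function.iterate_fixed (by simp) _

lemma tsum_q (t : ℝ) :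
    (∑' α : Fin 2 → ℕ, ‖evalR (mderiv α qpol) ![t, 0]‖ ^ 2)
      = t ^ 4 + 4 * t ^ 2 + 8 := by
  rw [← Equiv.tsum_eq (finTwoArrowEquiv ℕ).symm]
  rw [tsum_eq_sum (s := Finset.range 3 ×ˢ Finset.range 3)
    (by
      rintro ⟨m, n⟩ hmn
      simp only [Finset.mem_product, Finset.mem_range, not_and_or] at hmn
      have : mderiv ![m, n] qpol = 0 := mderiv_q_zero _ (by
        simp only [Matrix.cons_val_zero, Matrix.cons_val_one, Matrix.head_cons]; omega)
      simp [finTwoArrowEquiv, this, evalR])]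
  rw [Finset.sum_product]
  simp only [Finset.sum_range_succ, Finset.sum_range_zero, finTwoArrowEquiv]
  simp [mderiv_two, qpol, evalR, Function.iterate_succ, pderiv_X, Pi.single,
    Complex.norm_def, Complex.normSq, Complex.sq_norm]
  simp only [Real.sqrt_mul_self_eq_abs, mul_pow, sq_abs]
  ring

lemma tsum_d (t : ℝ) :
    (∑' α : Fin 2 → ℕ, ‖evalR (mderiv α dpol) ![t, 0]‖ ^ 2)
      = t ^ 2 + 1 := by
  rw [← Equiv.tsum_eq (finTwoArrowEquiv ℕ).symm]
  rw [tsum_eq_sum (s := Finset.range 2 ×ˢ Finset.range 2)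
    (by
      rintro ⟨m, n⟩ hmn
      simp only [Finset.mem_product, Finset.mem_range, not_and_or] at hmn
      have : mderiv ![m, n] dpol = 0 := mderiv_d_zero _ (by
        simp only [Matrix.cons_val_zero, Matrix.cons_val_one, Matrix.head_cons]; omega)
      simp [finTwoArrowEquiv, this, evalR])]
  rw [Finset.sum_product]
  simp only [Finset.sum_range_succ, Finset.sum_range_zero, finTwoArrowEquiv]
  simp [mderiv_two, dpol, evalR, Function.iterate_succ, pderiv_X, Pi.single,
    Complex.norm_def, Complex.normSq, Complex.sq_norm]

theorem stmt_14 :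
    (∀ ξ : Fin 2 → ℝ, ξ 0 * ξ 1 ≠ 0 →
      (Pmat ξ)⁻¹ = ((ξ 0 : ℂ) * (ξ 1 : ℂ))⁻¹ •
        !![0, (ξ 0 : ℂ); (ξ 1 : ℂ), -((ξ 0 : ℂ) ^ 2 + (ξ 1 : ℂ) ^ 2)]) ∧
    (¬ ∃ C : ℝ, ∀ ξ : Fin 2 → ℝ, ξ 0 * ξ 1 ≠ 0 →
      |((ξ 0) ^ 2 + (ξ 1) ^ 2) / (ξ 0 * ξ 1)| ≤ C) ∧
    (¬ ∃ C : ℝ, ∀ ξ : Fin 2 → ℝ,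
      ptilde (MvPolynomial.X 0 ^ 2 + MvPolynomial.X 1 ^ 2 : MvPolynomial (Fin 2) ℂ) ξ ≤
        C * ptilde (MvPolynomial.X 0 * MvPolynomial.X 1 : MvPolynomial (Fin 2) ℂ) ξ) := by
  refine ⟨?_, ?_, ?_⟩
  · intro ξ hξ
    have h0 : (ξ 0 : ℝ) ≠ 0 := fun h => hξ (by rw [h]; ring)
    have h1 : (ξ 1 : ℝ) ≠ 0 := fun h => hξ (by rw [h]; ring)
    have c0 : (ξ 0 : ℂ) ≠ 0 := by exact_mod_cast Complex.ofReal_ne_zero.mpr h0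
    have c1 : (ξ 1 : ℂ) ≠ 0 := by exact_mod_cast Complex.ofReal_ne_zero.mpr h1
    apply inv_eq_right_inv
    rw [Matrix.mul_smul]
    rw [show Pmat ξ * !![0, (ξ 0 : ℂ); (ξ 1 : ℂ), -((ξ 0 : ℂ) ^ 2 + (ξ 1 : ℂ) ^ 2)]
        = ((ξ 0 : ℂ) * ξ 1) • (1 : Matrix (Fin 2) (Fin 2) ℂ) by
      ext i j
      fin_cases i <;> fin_cases j <;>
        simp [Pmat, Matrix.mul_apply, Fin.sum_univ_two, Matrix.one_apply] <;> ring]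
    rw [smul_smul, inv_mul_cancel₀ (mul_ne_zero c0 c1), one_smul]
  · rintro ⟨C, hC⟩
    set t : ℝ := max C 1 + 1 with ht
    have ht1 : 1 ≤ max C 1 := le_max_right _ _
    have htpos : 0 < t := by positivity
    have htC : C < t := lt_of_le_of_lt (le_max_left C 1) (by linarith)
    have := hC ![t, 1] (by simp; positivity)
    simp only [Matrix.cons_val_zero, Matrix.cons_val_one, Matrix.head_cons, mul_one] at this
    rw [abs_of_nonneg (by positivity)] at this
    rw [div_le_iff₀ htpos] at this
    nlinarith
  · rintro ⟨C, hC⟩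
    set t : ℝ := |C| + 2 with ht
    have htC : C ≤ |C| := le_abs_self C
    have habs : 0 ≤ |C| := abs_nonneg C
    have := hC ![t, 0]
    rw [show (MvPolynomial.X 0 ^ 2 + MvPolynomial.X 1 ^ 2 : MvPolynomial (Fin 2) ℂ) = qpol
      from rfl, show (MvPolynomial.X 0 * MvPolynomial.X 1 : MvPolynomial (Fin 2) ℂ) = dpol
      from rfl, ptilde, ptilde, tsum_q, tsum_d] at this
    have hs1 : Real.sqrt (t ^ 4 + 4 * t ^ 2 + 8) ≤ Real.sqrt (C ^ 2 * (t ^ 2 + 1)) := by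
      rcases le_or_gt C 0 with hC0 | hC0
      · exfalso
        have hpos : 0 < Real.sqrt (t ^ 4 + 4 * t ^ 2 + 8) := Real.sqrt_pos.mpr (by positivity)
        have : Real.sqrt (t ^ 4 + 4 * t ^ 2 + 8) ≤ 0 := le_trans this
          (mul_nonpos_of_nonpos_of_nonneg hC0 (Real.sqrt_nonneg _))
        linarith
      · calc Real.sqrt (t ^ 4 + 4 * t ^ 2 + 8) ≤ C * Real.sqrt (t ^ 2 + 1) := this
          _ = Real.sqrt (C ^ 2 * (t ^ 2 + 1)) := by
              rw [Real.sqrt_mul (by positivity), Real.sqrt_sq hC0.le]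
    have h2 : t ^ 4 + 4 * t ^ 2 + 8 ≤ C ^ 2 * (t ^ 2 + 1) := by
      exact (Real.sqrt_le_sqrt_iff (by positivity)).mp hs1
    have h3 : C ^ 2 ≤ t ^ 2 := by rw [← sq_abs]; nlinarith
    have h4 : C ^ 2 + 4 ≤ t ^ 2 := by rw [← sq_abs]; nlinarith
    nlinarith [h2, h3, h4, sq_nonneg t]
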